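/- arXiv:2411.02139 — 2 statements merged into one kernel-verified Lean document; each statement's English description precedes it below -/
import Mathlib

section
/- Let A₁,…,A_m be n×n symmetric PSD matrices and B₁,…,B_m be k×k symmetric PSD matrices. Then λ_max(∑_{i=1}^m A_i ⊗ B_i) ≤ (max_{1≤j≤m} λ_max(A_j)) · λ_max(∑_{i=1}^m B_i). -/
/-!
With the Loewner order, `A i ≤ α • 1` for `α` the largest eigenvalue of all the `A i`, and
`∑ i, B i ≤ β • 1` for `β` the largest eigenvalue of `∑ i, B i`. Since the Kronecker product
with a positive semidefinite factor is monotone in the other factor,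
`∑ i, A i ⊗ₖ B i ≤ (α • 1) ⊗ₖ ∑ i, B i ≤ (α • 1) ⊗ₖ (β • 1) = (α * β) • 1`.
-/

open Matrix Kronecker
open scoped MatrixOrder ComplexOrder

namespace Matrix

section Bilinear

variable {R ι l m n p : Type*}

theorem sub_kronecker [NonUnitalNonAssocRing R] (A₁ A₂ : Matrix l m R) (B : Matrix n p R) :
    (A₁ - A₂) ⊗ₖ B = A₁ ⊗ₖ B - A₂ ⊗ₖ B := by
  ext; simp [sub_mul]

theorem kronecker_sub [NonUnitalNonAssocRing R] (A : Matrix l m R) (B₁ B₂ : Matrix n p R) :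
    A ⊗ₖ (B₁ - B₂) = A ⊗ₖ B₁ - A ⊗ₖ B₂ := by
  ext; simp [mul_sub]

theorem kronecker_sum [NonUnitalNonAssocSemiring R] (s : Finset ι) (A : Matrix l m R)
    (B : ι → Matrix n p R) : A ⊗ₖ (∑ i ∈ s, B i) = ∑ i ∈ s, A ⊗ₖ B i := by
  ext; simp [Matrix.sum_apply, Finset.mul_sum]

end Bilinear

variable {𝕜 ι l n : Type*} [RCLike 𝕜]

theorem IsHermitian.le_smul_one_iff_eigenvalues_le [Fintype n] [DecidableEq n]
    {M : Matrix n n 𝕜} (hM : M.IsHermitian) {r : ℝ} :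
    M ≤ r • 1 ↔ ∀ i, hM.eigenvalues i ≤ r := by
  rw [← Algebra.algebraMap_eq_smul_one, le_algebraMap_iff_spectrum_le hM,
    hM.spectrum_real_eq_range_eigenvalues, Set.forall_mem_range]

variable [Finite l] [Finite n]

theorem kronecker_le_kronecker_left {A₁ A₂ : Matrix l l 𝕜} {B : Matrix n n 𝕜}
    (hA : A₁ ≤ A₂) (hB : 0 ≤ B) : A₁ ⊗ₖ B ≤ A₂ ⊗ₖ B := by
  rw [le_iff, ← sub_kronecker]
  exact (le_iff.mp hA).kronecker hB.posSemidef

theorem kronecker_le_kronecker_right {A : Matrix l l 𝕜} {B₁ B₂ : Matrix n n 𝕜}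
    (hA : 0 ≤ A) (hB : B₁ ≤ B₂) : A ⊗ₖ B₁ ≤ A ⊗ₖ B₂ := by
  rw [le_iff, ← kronecker_sub]
  exact hA.posSemidef.kronecker (le_iff.mp hB)

theorem sum_kronecker_le_smul_one [Fintype ι] [DecidableEq l] [DecidableEq n]
    {A : ι → Matrix l l 𝕜} {B : ι → Matrix n n 𝕜} {α β : ℝ} (hα : 0 ≤ α)
    (hA : ∀ i, A i ≤ α • 1) (hB : ∀ i, 0 ≤ B i) (hBβ : ∑ i, B i ≤ β • 1) :
    ∑ i, A i ⊗ₖ B i ≤ (α * β) • 1 := by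
  have hα1 : 0 ≤ (α • 1 : Matrix l l 𝕜) := (PosSemidef.one.smul hα).nonneg
  calc ∑ i, A i ⊗ₖ B i ≤ ∑ i, (α • 1 : Matrix l l 𝕜) ⊗ₖ B i :=
        Finset.sum_le_sum fun i _ => kronecker_le_kronecker_left (hA i) (hB i)
    _ = (α • 1 : Matrix l l 𝕜) ⊗ₖ ∑ i, B i := (kronecker_sum _ _ _).symm
    _ ≤ (α • 1 : Matrix l l 𝕜) ⊗ₖ (β • 1 : Matrix n n 𝕜) :=
        kronecker_le_kronecker_right hα1 hBβ
    _ = (α * β) • 1 := by rw [smul_kronecker, kronecker_smul, one_kronecker_one, smul_smul]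

end Matrix

/-- Upper bound on the largest eigenvalue of a sum of Kronecker products of PSD matrices. -/
theorem stmt_3 {m n k : ℕ} (A : Fin m → Matrix (Fin n) (Fin n) ℝ)
    (B : Fin m → Matrix (Fin k) (Fin k) ℝ)
    (hA : ∀ i, (A i).PosSemidef) (hB : ∀ i, (B i).PosSemidef)
    (hS : (∑ i, A i ⊗ₖ B i).IsHermitian) (hBs : (∑ i, B i).IsHermitian) :
    (⨆ c, hS.eigenvalues c) ≤
      (⨆ j, ⨆ a, (hA j).1.eigenvalues a) * (⨆ b, hBs.eigenvalues b) := by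
  set α := ⨆ j, ⨆ a, (hA j).1.eigenvalues a
  set β := ⨆ b, hBs.eigenvalues b
  have hα : 0 ≤ α := Real.iSup_nonneg fun j => Real.iSup_nonneg (hA j).eigenvalues_nonneg
  have hβ : 0 ≤ β := Real.iSup_nonneg (posSemidef_sum _ fun i _ => hB i).eigenvalues_nonneg
  have hAα (i) : A i ≤ α • 1 :=
    (hA i).1.le_smul_one_iff_eigenvalues_le.mpr fun a =>
      (le_ciSup (Finite.bddAbove_range _) a).trans
        (le_ciSup (Finite.bddAbove_range fun j => ⨆ a, (hA j).1.eigenvalues a) i)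
  have hBβ : ∑ i, B i ≤ β • 1 :=
    hBs.le_smul_one_iff_eigenvalues_le.mpr fun b => le_ciSup (Finite.bddAbove_range _) b
  have hSαβ := sum_kronecker_le_smul_one hα hAα (fun i => (hB i).nonneg) hBβ
  exact Real.iSup_le (hS.le_smul_one_iff_eigenvalues_le.mp hSαβ) (mul_nonneg hα hβ)
end

section
/- Let X ∈ ℝ^{d×n}, W ∈ ℝ^{k×m}, V ∈ ℝ^{m×d}, and for each i = 1,…,m let Λ^i be an n×n diagonal matrix whose diagonal entries lie in {α, 1} for a constant α ∈ (0,1]. Define Γ = ∑_{i=1}^m Λ^i Xᵀ V_{i,•}ᵀ V_{i,•} X Λ^i and Ĝ = ∑_{i=1}^m Λ^i XᵀX Λ^i ⊗ (W_{•,i} W_{•,i}ᵀ) + Γ ⊗ I_k, where W_{•,i} is the i-th column of W and V_{i,•} the i-th row of V. If α²σ_min(X)²σ_min(W)² + λ_min(Γ) > 0, then κ(Ĝ) ≤ (σ_max(X)²σ_max(W)² + λ_max(Γ)) / (α²σ_min(X)²σ_min(W)² + λ_min(Γ)). -/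
/-!
In the Loewner order `λ_min(A) • 1 ≤ A ≤ λ_max(A) • 1` for Hermitian `A`, and both conjugation
and Kronecker products with positive semidefinite factors are monotone. Since
`α² ≤ (Λⁱ_jj)² ≤ 1`, each block `Λⁱ XᵀX Λⁱ` lies between `α² λ_min(XᵀX) • 1` and
`λ_max(XᵀX) • 1`; tensoring with the rank-one matrices `W_{•,i} W_{•,i}ᵀ`, which sum to `WWᵀ`,
and bounding `WWᵀ` and `Γ` by their extreme eigenvalues sandwiches `Ĝ` between the denominator
and the numerator of the claimed bound, times the identity.
-/

open Matrix Kronecker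
open scoped MatrixOrder

namespace Matrix

section Spectrum

variable {𝕜 n : Type*} [RCLike 𝕜] [Fintype n] [DecidableEq n] {A : Matrix n n 𝕜} {c : ℝ}

lemma IsHermitian.le_smul_one_iff (hA : A.IsHermitian) :
    A ≤ c • (1 : Matrix n n 𝕜) ↔ ∀ i, hA.eigenvalues i ≤ c := by
  rw [← Algebra.algebraMap_eq_smul_one, le_algebraMap_iff_spectrum_le hA.isSelfAdjoint,
    hA.spectrum_real_eq_range_eigenvalues, Set.forall_mem_range]

lemma IsHermitian.smul_one_le_iff (hA : A.IsHermitian) :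
    c • (1 : Matrix n n 𝕜) ≤ A ↔ ∀ i, c ≤ hA.eigenvalues i := by
  rw [← Algebra.algebraMap_eq_smul_one, algebraMap_le_iff_le_spectrum hA.isSelfAdjoint,
    hA.spectrum_real_eq_range_eigenvalues, Set.forall_mem_range]

lemma IsHermitian.le_iSup_eigenvalues_smul_one (hA : A.IsHermitian) :
    A ≤ (⨆ i, hA.eigenvalues i) • (1 : Matrix n n 𝕜) :=
  hA.le_smul_one_iff.2 fun i => le_ciSup (Set.finite_range _).bddAbove i

lemma IsHermitian.iInf_eigenvalues_smul_one_le (hA : A.IsHermitian) :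
    (⨅ i, hA.eigenvalues i) • (1 : Matrix n n 𝕜) ≤ A :=
  hA.smul_one_le_iff.2 fun i => ciInf_le (Set.finite_range _).bddBelow i

lemma IsHermitian.iSup_eigenvalues_le [Nonempty n] (hA : A.IsHermitian)
    (h : A ≤ c • (1 : Matrix n n 𝕜)) : ⨆ i, hA.eigenvalues i ≤ c :=
  ciSup_le (hA.le_smul_one_iff.1 h)

lemma IsHermitian.le_iInf_eigenvalues [Nonempty n] (hA : A.IsHermitian)
    (h : c • (1 : Matrix n n 𝕜) ≤ A) : c ≤ ⨅ i, hA.eigenvalues i :=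
  le_ciInf (hA.smul_one_le_iff.1 h)

lemma IsHermitian.iInf_eigenvalues_le_iSup_eigenvalues (hA : A.IsHermitian) :
    ⨅ i, hA.eigenvalues i ≤ ⨆ i, hA.eigenvalues i := by
  rcases isEmpty_or_nonempty n with _ | _
  · simp only [Real.iInf_of_isEmpty, Real.iSup_of_isEmpty, le_refl]
  · exact ciInf_le_ciSup (Set.finite_range _).bddBelow (Set.finite_range _).bddAbove

lemma IsHermitian.iSup_div_iInf_eigenvalues_le (hA : A.IsHermitian) {l u : ℝ} (hl : 0 < l)
    (hu : 0 ≤ u) (hlo : l • 1 ≤ A) (hup : A ≤ u • 1) :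
    (⨆ i, hA.eigenvalues i) / (⨅ i, hA.eigenvalues i) ≤ u / l := by
  rcases isEmpty_or_nonempty n with _ | _
  · rw [Real.iSup_of_isEmpty, Real.iInf_of_isEmpty, div_zero]
    exact div_nonneg hu hl.le
  · exact div_le_div₀ hu (hA.iSup_eigenvalues_le hup) hl (hA.le_iInf_eigenvalues hlo)

end Spectrum

section Kronecker

variable {𝕜 n p : Type*} [RCLike 𝕜] [Fintype n] [Fintype p]

lemma kronecker_le_kronecker_left_s16 {A A' : Matrix n n 𝕜} {B : Matrix p p 𝕜} (h : A ≤ A')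
    (hB : 0 ≤ B) : A ⊗ₖ B ≤ A' ⊗ₖ B := by
  rw [← add_sub_cancel A A', add_kronecker]
  exact le_add_of_nonneg_right <| nonneg_iff_posSemidef.2 <|
    (nonneg_iff_posSemidef.1 (sub_nonneg.2 h)).kronecker (nonneg_iff_posSemidef.1 hB)

lemma kronecker_le_kronecker_right_s16 {A : Matrix n n 𝕜} {B B' : Matrix p p 𝕜} (hA : 0 ≤ A)
    (h : B ≤ B') : A ⊗ₖ B ≤ A ⊗ₖ B' := by
  rw [← add_sub_cancel B B', kronecker_add]
  exact le_add_of_nonneg_right <| nonneg_iff_posSemidef.2 <|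
    (nonneg_iff_posSemidef.1 hA).kronecker (nonneg_iff_posSemidef.1 (sub_nonneg.2 h))

end Kronecker

section Diagonal

variable {n : Type*} [DecidableEq n]

lemma diagonal_mono {d e : n → ℝ} (h : d ≤ e) : diagonal d ≤ diagonal e := by
  rw [le_iff, diagonal_sub]
  exact PosSemidef.diagonal (sub_nonneg.2 h)

variable [Fintype n]

lemma diagonal_mul_smul_one_mul_diagonal (d : n → ℝ) (c : ℝ) :
    diagonal d * (c • 1) * diagonal d = diagonal fun j => c * d j ^ 2 := by
  rw [smul_one_eq_diagonal, diagonal_mul_diagonal, diagonal_mul_diagonal]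
  congr 1
  funext j
  ring

lemma diagonal_mul_mul_diagonal_le {A : Matrix n n ℝ} {d : n → ℝ} {c : ℝ} (hA : A ≤ c • 1)
    (hc : 0 ≤ c) (hd : ∀ j, d j ^ 2 ≤ 1) : diagonal d * A * diagonal d ≤ c • 1 :=
  calc diagonal d * A * diagonal d ≤ diagonal d * (c • 1) * diagonal d :=
        (isHermitian_diagonal d).isSelfAdjoint.conjugate_le_conjugate hA
    _ = diagonal fun j => c * d j ^ 2 := diagonal_mul_smul_one_mul_diagonal d c
    _ ≤ diagonal fun _ => c := diagonal_mono fun j => mul_le_of_le_one_right hc (hd j)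
    _ = c • 1 := (smul_one_eq_diagonal c).symm

lemma smul_one_le_diagonal_mul_mul_diagonal {A : Matrix n n ℝ} {d : n → ℝ} {β c : ℝ}
    (hA : c • 1 ≤ A) (hc : 0 ≤ c) (hd : ∀ j, β ≤ d j ^ 2) :
    (β * c) • 1 ≤ diagonal d * A * diagonal d :=
  calc (β * c) • (1 : Matrix n n ℝ) = diagonal fun _ => c * β := by
        rw [smul_one_eq_diagonal, mul_comm]
    _ ≤ diagonal fun j => c * d j ^ 2 :=
        diagonal_mono fun j => mul_le_mul_of_nonneg_left (hd j) hc
    _ = diagonal d * (c • 1) * diagonal d := (diagonal_mul_smul_one_mul_diagonal d c).symm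
    _ ≤ diagonal d * A * diagonal d :=
        (isHermitian_diagonal d).isSelfAdjoint.conjugate_le_conjugate hA

end Diagonal

section GaussNewton

variable {R n p ι : Type*} [Fintype ι]

lemma sum_kronecker_vecMulVec_col [CommSemiring R] (C : Matrix n n R) (W : Matrix p ι R) :
    ∑ i, C ⊗ₖ vecMulVec (fun a => W a i) (fun a => W a i) = C ⊗ₖ (W * Wᵀ) := by
  ext ⟨i, a⟩ ⟨j, b⟩
  simp [Matrix.sum_apply, Matrix.mul_apply, vecMulVec_apply, Finset.mul_sum]

lemma vecMulVec_self_nonneg [Fintype p] (v : p → ℝ) : 0 ≤ vecMulVec v v := by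
  simpa using nonneg_iff_posSemidef.2 (posSemidef_vecMulVec_self_star v)

def gaussNewtonMatrix [CommSemiring R] [DecidableEq p] (T : ι → Matrix n n R)
    (W : Matrix p ι R) (Γ : Matrix n n R) : Matrix (n × p) (n × p) R :=
  ∑ i, T i ⊗ₖ vecMulVec (fun a => W a i) (fun a => W a i) + Γ ⊗ₖ 1

variable [Fintype n] [Fintype p] [DecidableEq n] [DecidableEq p]
  {T : ι → Matrix n n ℝ} {W : Matrix p ι ℝ} {Γ : Matrix n n ℝ} {c b g : ℝ}

lemma gaussNewtonMatrix_le (hc : 0 ≤ c) (hT : ∀ i, T i ≤ c • 1) (hW : W * Wᵀ ≤ b • 1)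
    (hΓ : Γ ≤ g • 1) : gaussNewtonMatrix T W Γ ≤ (c * b + g) • 1 :=
  calc gaussNewtonMatrix T W Γ
      ≤ ∑ i, (c • 1 : Matrix n n ℝ) ⊗ₖ vecMulVec (fun a => W a i) (fun a => W a i) +
          (g • 1 : Matrix n n ℝ) ⊗ₖ (1 : Matrix p p ℝ) :=
        add_le_add (Finset.sum_le_sum fun i _ =>
            kronecker_le_kronecker_left_s16 (hT i) (vecMulVec_self_nonneg _))
          (kronecker_le_kronecker_left_s16 hΓ zero_le_one)
    _ ≤ (c • 1 : Matrix n n ℝ) ⊗ₖ (b • 1 : Matrix p p ℝ) + (g • 1 : Matrix n n ℝ) ⊗ₖ 1 := by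
        rw [sum_kronecker_vecMulVec_col]
        gcongr
        exact kronecker_le_kronecker_right_s16 (smul_nonneg hc zero_le_one) hW
    _ = (c * b + g) • 1 := by
        simp only [smul_kronecker, kronecker_smul, one_kronecker_one]
        module

lemma le_gaussNewtonMatrix (hc : 0 ≤ c) (hT : ∀ i, c • 1 ≤ T i) (hW : b • 1 ≤ W * Wᵀ)
    (hΓ : g • 1 ≤ Γ) : (c * b + g) • 1 ≤ gaussNewtonMatrix T W Γ :=
  calc (c * b + g) • (1 : Matrix (n × p) (n × p) ℝ)
      = (c • 1 : Matrix n n ℝ) ⊗ₖ (b • 1 : Matrix p p ℝ) + (g • 1 : Matrix n n ℝ) ⊗ₖ 1 := by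
        simp only [smul_kronecker, kronecker_smul, one_kronecker_one]
        module
    _ ≤ ∑ i, (c • 1 : Matrix n n ℝ) ⊗ₖ vecMulVec (fun a => W a i) (fun a => W a i) +
          (g • 1 : Matrix n n ℝ) ⊗ₖ (1 : Matrix p p ℝ) := by
        rw [sum_kronecker_vecMulVec_col]
        gcongr
        exact kronecker_le_kronecker_right_s16 (smul_nonneg hc zero_le_one) hW
    _ ≤ gaussNewtonMatrix T W Γ :=
        add_le_add (Finset.sum_le_sum fun i _ =>
            kronecker_le_kronecker_left_s16 (hT i) (vecMulVec_self_nonneg _))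
          (kronecker_le_kronecker_left_s16 hΓ zero_le_one)

end GaussNewton

end Matrix

/-- Squared singular values are encoded as extreme eigenvalues of the Gram matrices:
`σ_max(X)² = λ_max(XᵀX)`, `σ_min(X)² = λ_min(XᵀX)`, and likewise `σ(W)²` through `WWᵀ`. -/
theorem stmt_16_general {d n k m : ℕ} (α : ℝ) (hα0 : 0 < α) (hα1 : α ≤ 1)
    (X : Matrix (Fin d) (Fin n) ℝ) (W : Matrix (Fin k) (Fin m) ℝ)
    (Λ : Fin m → Fin n → ℝ)
    (hΛ : ∀ i j, Λ i j = α ∨ Λ i j = 1)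
    (Γ : Matrix (Fin n) (Fin n) ℝ)
    (G : Matrix (Fin n × Fin k) (Fin n × Fin k) ℝ)
    (hGdef : G = (∑ i, (Matrix.diagonal (Λ i) * (Xᵀ * X) * Matrix.diagonal (Λ i)) ⊗ₖ
        Matrix.vecMulVec (fun a => W a i) (fun a => W a i)) +
        Γ ⊗ₖ (1 : Matrix (Fin k) (Fin k) ℝ))
    (hXX : (Xᵀ * X).IsHermitian) (hWW : (W * Wᵀ).IsHermitian)
    (hΓ : Γ.IsHermitian) (hG : G.IsHermitian)
    (hpos : 0 < α ^ 2 * (⨅ i, hXX.eigenvalues i) * (⨅ i, hWW.eigenvalues i) +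
        (⨅ i, hΓ.eigenvalues i)) :
    (⨆ i, hG.eigenvalues i) / (⨅ i, hG.eigenvalues i) ≤
      ((⨆ i, hXX.eigenvalues i) * (⨆ i, hWW.eigenvalues i) + (⨆ i, hΓ.eigenvalues i)) /
        (α ^ 2 * (⨅ i, hXX.eigenvalues i) * (⨅ i, hWW.eigenvalues i) +
          (⨅ i, hΓ.eigenvalues i)) := by
  have hXX0 : (Xᵀ * X).PosSemidef := by simpa using posSemidef_conjTranspose_mul_self X
  have hWW0 : (W * Wᵀ).PosSemidef := by simpa using posSemidef_self_mul_conjTranspose W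
  have hXmax : 0 ≤ ⨆ i, hXX.eigenvalues i := Real.iSup_nonneg hXX0.eigenvalues_nonneg
  have hXmin : 0 ≤ ⨅ i, hXX.eigenvalues i := Real.iInf_nonneg hXX0.eigenvalues_nonneg
  have hWmin : 0 ≤ ⨅ i, hWW.eigenvalues i := Real.iInf_nonneg hWW0.eigenvalues_nonneg
  have hα : α ^ 2 ≤ 1 := pow_le_one₀ hα0.le hα1
  have hΛ_le_one : ∀ i j, Λ i j ^ 2 ≤ 1 := fun i j => by
    rcases hΛ i j with h | h <;> simp [h, hα]
  have hα_le_Λ : ∀ i j, α ^ 2 ≤ Λ i j ^ 2 := fun i j => by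
    rcases hΛ i j with h | h <;> simp [h, hα]
  have hup : G ≤ ((⨆ i, hXX.eigenvalues i) * (⨆ i, hWW.eigenvalues i) +
      (⨆ i, hΓ.eigenvalues i)) • 1 := by
    rw [hGdef]
    exact gaussNewtonMatrix_le hXmax (fun i => diagonal_mul_mul_diagonal_le
      hXX.le_iSup_eigenvalues_smul_one hXmax (hΛ_le_one i))
      hWW.le_iSup_eigenvalues_smul_one hΓ.le_iSup_eigenvalues_smul_one
  have hlo : (α ^ 2 * (⨅ i, hXX.eigenvalues i) * (⨅ i, hWW.eigenvalues i) +
      (⨅ i, hΓ.eigenvalues i)) • 1 ≤ G := by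
    rw [hGdef]
    exact le_gaussNewtonMatrix (by positivity) (fun i => smul_one_le_diagonal_mul_mul_diagonal
      hXX.iInf_eigenvalues_smul_one_le hXmin (hα_le_Λ i))
      hWW.iInf_eigenvalues_smul_one_le hΓ.iInf_eigenvalues_smul_one_le
  have hden_le_num : α ^ 2 * (⨅ i, hXX.eigenvalues i) * (⨅ i, hWW.eigenvalues i) +
      (⨅ i, hΓ.eigenvalues i) ≤
      (⨆ i, hXX.eigenvalues i) * (⨆ i, hWW.eigenvalues i) + (⨆ i, hΓ.eigenvalues i) := by
    nlinarith [mul_le_mul hXX.iInf_eigenvalues_le_iSup_eigenvalues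
      hWW.iInf_eigenvalues_le_iSup_eigenvalues hWmin hXmax, mul_nonneg hXmin hWmin,
      hΓ.iInf_eigenvalues_le_iSup_eigenvalues]
  exact hG.iSup_div_iInf_eigenvalues_le hpos (hpos.le.trans hden_le_num) hlo hup

/-- Gauss–Newton condition number bound for a one-hidden-layer Leaky-ReLU network with
negative slope `α`. Here `Λ i` is the diagonal of activation derivatives (entries in
`{α, 1}`), `Γ = ∑ᵢ Λⁱ Xᵀ V_{i,•}ᵀ V_{i,•} X Λⁱ`, and
`Ĝ = ∑ᵢ Λⁱ XᵀX Λⁱ ⊗ W_{•,i}W_{•,i}ᵀ + Γ ⊗ I_k`. The singular values are encoded as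
`σ_max(X)² = λ_max(XᵀX)`, `σ_min(X)² = λ_min(XᵀX)`, `σ_max(W)² = λ_max(WWᵀ)`,
`σ_min(W)² = λ_min(WWᵀ)`. -/
theorem stmt_16 {d n k m : ℕ} (α : ℝ) (hα0 : 0 < α) (hα1 : α ≤ 1)
    (X : Matrix (Fin d) (Fin n) ℝ) (W : Matrix (Fin k) (Fin m) ℝ)
    (V : Matrix (Fin m) (Fin d) ℝ) (Λ : Fin m → Fin n → ℝ)
    (hΛ : ∀ i j, Λ i j = α ∨ Λ i j = 1)
    (Γ : Matrix (Fin n) (Fin n) ℝ)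
    (hΓdef : Γ = ∑ i, Matrix.diagonal (Λ i) *
        Matrix.vecMulVec (Matrix.vecMul (fun l => V i l) X) (Matrix.vecMul (fun l => V i l) X) *
        Matrix.diagonal (Λ i))
    (G : Matrix (Fin n × Fin k) (Fin n × Fin k) ℝ)
    (hGdef : G = (∑ i, (Matrix.diagonal (Λ i) * (Xᵀ * X) * Matrix.diagonal (Λ i)) ⊗ₖ
        Matrix.vecMulVec (fun a => W a i) (fun a => W a i)) +
        Γ ⊗ₖ (1 : Matrix (Fin k) (Fin k) ℝ))
    (hXX : (Xᵀ * X).IsHermitian) (hWW : (W * Wᵀ).IsHermitian)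
    (hΓ : Γ.IsHermitian) (hG : G.IsHermitian)
    (hpos : 0 < α ^ 2 * (⨅ i, hXX.eigenvalues i) * (⨅ i, hWW.eigenvalues i) +
        (⨅ i, hΓ.eigenvalues i)) :
    (⨆ i, hG.eigenvalues i) / (⨅ i, hG.eigenvalues i) ≤
      ((⨆ i, hXX.eigenvalues i) * (⨆ i, hWW.eigenvalues i) + (⨆ i, hΓ.eigenvalues i)) /
        (α ^ 2 * (⨅ i, hXX.eigenvalues i) * (⨅ i, hWW.eigenvalues i) +
          (⨅ i, hΓ.eigenvalues i)) :=
  stmt_16_general α hα0 hα1 X W Λ hΛ Γ G hGdef hXX hWW hΓ hG hpos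
end
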